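/- Let s ≥ 3 and let c_1, c_2 ≥ 2 and c_3 ≥ 1 be integers. Let K be the s-hypergraph consisting of two vertex-disjoint loose cycles C_1 and C_2 of lengths c_1 and c_2 respectively, together with a loose path of length c_3 whose endpoints are a vertex of C_1 and a vertex of C_2 and whose internal vertices are disjoint from C_1 ∪ C_2. Then e(K) = c_1 + c_2 + c_3, v(K) = e(K)(s−1) − 1, and K is strictly balanced; in particular 1/ρ(K) = s − 1 − 1/(c_1 + c_2 + c_3). -/

import Mathlib

open Filter Topology

namespace RandomHypergraph

/-! ### Finite `s`-uniform hypergraphs (with vertices in `ℕ`) -/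

/-- An `s`-uniform hypergraph with a finite vertex set contained in `ℕ`. -/
structure HGraph (s : ℕ) where
  verts : Finset ℕ
  edges : Finset (Finset ℕ)
  edge_sub : ∀ e ∈ edges, e ⊆ verts
  edge_card : ∀ e ∈ edges, e.card = s

namespace HGraph

variable {s : ℕ}

/-- Subhypergraph relation. -/
def Sub (H G : HGraph s) : Prop := H.verts ⊆ G.verts ∧ H.edges ⊆ G.edges

/-- Density `ρ(G) = e(G)/v(G)`. -/
noncomputable def rho (G : HGraph s) : ℝ := (G.edges.card : ℝ) / (G.verts.card : ℝ)

/-- Maximal density `ρ^max(G)` over subhypergraphs with nonempty vertex set. -/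
noncomputable def rhoMax (G : HGraph s) : ℝ :=
  sSup {r : ℝ | ∃ H : HGraph s, H.Sub G ∧ H.verts.Nonempty ∧ r = H.rho}

/-- A strictly balanced hypergraph. -/
def StrictlyBalanced (G : HGraph s) : Prop :=
  ∀ H : HGraph s, H.Sub G → H ≠ G → H.verts.Nonempty → H.rho < G.rho

/-- Relative density `ρ(G,H) = (e(G)-e(H))/(v(G)-v(H))`. -/
noncomputable def rhoPair (G H : HGraph s) : ℝ :=
  ((G.edges.card : ℝ) - (H.edges.card : ℝ)) / ((G.verts.card : ℝ) - (H.verts.card : ℝ))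

/-- A strictly balanced pair `(G, H)`. -/
def PairStrictlyBalanced (G H : HGraph s) : Prop :=
  ∀ K : HGraph s, H.Sub K → K.Sub G → K ≠ H → K ≠ G → rhoPair K H < rhoPair G H

/-- Isomorphism of hypergraphs. -/
def Iso (G H : HGraph s) : Prop :=
  ∃ σ : ℕ → ℕ, Set.BijOn σ G.verts H.verts ∧ H.edges = G.edges.image (Finset.image σ)

/-- `σ` is an automorphism of `G` (normalized to be the identity off the vertex set). -/
def IsAuto (G : HGraph s) (σ : ℕ → ℕ) : Prop :=
  Set.BijOn σ G.verts G.verts ∧ (∀ x, x ∉ G.verts → σ x = x) ∧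
    G.edges = G.edges.image (Finset.image σ)

/-- The number of automorphisms of `G`. -/
noncomputable def autCount (G : HGraph s) : ℕ := Set.ncard {σ : ℕ → ℕ | G.IsAuto σ}

/-- `f_α(G,H) = (v(G) - v(H)) - α (e(G) - e(H))`. -/
noncomputable def fA (α : ℝ) (G H : HGraph s) : ℝ :=
  ((G.verts.card : ℝ) - (H.verts.card : ℝ)) - α * ((G.edges.card : ℝ) - (H.edges.card : ℝ))

/-- The pair `(G,H)` is `α`-safe. -/
def Asafe (α : ℝ) (G H : HGraph s) : Prop :=
  ∀ K : HGraph s, H.Sub K → K.Sub G → K ≠ H → 0 < fA α K H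

/-- The pair `(G,H)` is `α`-rigid. -/
def Arigid (α : ℝ) (G H : HGraph s) : Prop :=
  ∀ K : HGraph s, H.Sub K → K.Sub G → K ≠ G → fA α G K < 0

/-- The pair `(G,H)` is `α`-neutral. -/
def Aneutral (α : ℝ) (G H : HGraph s) : Prop :=
  (∀ K : HGraph s, H.Sub K → K.Sub G → K ≠ H → K ≠ G → 0 < fA α K H) ∧ fA α G H = 0

end HGraph

/-- The hypergraph with a single vertex `x` and no edges. -/
def singleHG (s : ℕ) (x : ℕ) : HGraph s := ⟨{x}, ∅, by simp, by simp⟩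

/-- The empty hypergraph. -/
def emptyHG (s : ℕ) : HGraph s := ⟨∅, ∅, by simp, by simp⟩

/-- The automorphisms of `H` extendable to an automorphism of `G`. -/
noncomputable def extAutCount {s : ℕ} (G H : HGraph s) : ℕ :=
  Set.ncard {σ : ℕ → ℕ | H.IsAuto σ ∧ ∃ τ : ℕ → ℕ, G.IsAuto τ ∧ ∀ x ∈ H.verts, τ x = σ x}

/-- The automorphisms of `G` fixing `V(H)` pointwise. -/
noncomputable def fixAutCount {s : ℕ} (G H : HGraph s) : ℕ :=
  Set.ncard {σ : ℕ → ℕ | G.IsAuto σ ∧ ∀ x ∈ H.verts, σ x = x}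

/-! ### Copies of hypergraphs inside an ambient hypergraph -/

/-- The ambient hypergraph with vertex set `A ⊆ V` and edge set `Γ` contains a copy
(a not necessarily induced subhypergraph isomorphic to) the `s`-hypergraph `G`. -/
def ContainsCopy {s : ℕ} {V : Type} [DecidableEq V] (A : Finset V) (Γ : Finset (Finset V))
    (G : HGraph s) : Prop :=
  ∃ f : ℕ → V, Set.InjOn f G.verts ∧ (∀ v ∈ G.verts, f v ∈ A) ∧ ∀ e ∈ G.edges, e.image f ∈ Γ

/-- `(W, F)` is a copy of `G` (a subhypergraph isomorphic to `G`) in the ambient hypergraph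
with edge set `Γ`. -/
def IsCopy {s : ℕ} {V : Type} [DecidableEq V] (Γ : Finset (Finset V)) (G : HGraph s)
    (W : Finset V) (F : Finset (Finset V)) : Prop :=
  F ⊆ Γ ∧ ∃ f : ℕ → V, Set.InjOn f G.verts ∧ W = G.verts.image f ∧
    F = G.edges.image (Finset.image f)

/-- The number of subhypergraphs of the hypergraph with edge set `Γ` isomorphic to `G`. -/
noncomputable def copyCount {s : ℕ} {V : Type} [DecidableEq V] (Γ : Finset (Finset V))
    (G : HGraph s) : ℕ :=
  Set.ncard {WF : Finset V × Finset (Finset V) | IsCopy Γ G WF.1 WF.2}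

/-- The number of copies of `H` in `Γ` which are not contained in any copy of `G`. -/
noncomputable def badCopyCount {s : ℕ} {V : Type} [DecidableEq V] (Γ : Finset (Finset V))
    (G H : HGraph s) : ℕ :=
  Set.ncard {WF : Finset V × Finset (Finset V) | IsCopy Γ H WF.1 WF.2 ∧
    ¬ ∃ W' F', IsCopy Γ G W' F' ∧ WF.1 ⊆ W' ∧ WF.2 ⊆ F'}

/-! ### Extensions and maximality -/

/-- `f` realizes a strict `(G,H)`-extension (of the tuple `f|_{V(H)}`) inside the ambient
hypergraph with vertex set `A` and edge set `Γ`. -/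
def IsStrictExt {s : ℕ} {V : Type} [DecidableEq V] (A : Finset V) (Γ : Finset (Finset V))
    (G H : HGraph s) (f : ℕ → V) : Prop :=
  Set.InjOn f G.verts ∧ (∀ v ∈ G.verts, f v ∈ A) ∧
    ∀ e : Finset ℕ, e ⊆ G.verts → e.card = s → ¬ e ⊆ H.verts →
      (e ∈ G.edges ↔ e.image f ∈ Γ)

/-- The pair `(G̃, H̃)` (given by the embedding `f` of the pair `(G,H)`) is `(K,T)`-maximal in
the ambient hypergraph with vertex set `A` and edge set `Γ`. -/
def PairMaximal {s : ℕ} {V : Type} [DecidableEq V] (A : Finset V) (Γ : Finset (Finset V))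
    (G H : HGraph s) (f : ℕ → V) (K T : HGraph s) : Prop :=
  ∀ t : ℕ → V, Set.InjOn t T.verts →
    (∀ v ∈ T.verts, t v ∈ G.verts.image f) →
    (¬ ∀ v ∈ T.verts, t v ∈ H.verts.image f) →
    ¬ ∃ h : ℕ → V, Set.InjOn h K.verts ∧ (∀ v ∈ K.verts, h v ∈ A) ∧
        (∀ v ∈ T.verts, h v = t v) ∧
        (∀ v ∈ K.verts, v ∉ T.verts → h v ∉ G.verts.image f) ∧
        (∀ e : Finset ℕ, e ⊆ K.verts → e.card = s → ¬ e ⊆ T.verts →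
          (e ∈ K.edges ↔ e.image h ∈ Γ)) ∧
        (∀ e' ∈ Γ, (e' ∩ (K.verts \ T.verts).image h).Nonempty →
          (e' ∩ (G.verts.image f \ T.verts.image t)).Nonempty →
          (∃ e ∈ K.edges, e' = e.image h) ∨ (∃ e ∈ G.edges, e' = e.image f))

/-! ### The random hypergraph `G^s(n,p)` -/

/-- All potential edges: the `s`-element subsets of `Fin n`. -/
def cands (s n : ℕ) : Finset (Finset (Fin n)) := Finset.univ.filter fun e => e.card = s

/-- The probability weight of the hypergraph with edge set `E` under `G^s(n,p)`. -/
noncomputable def weight (s n : ℕ) (p : ℝ) (E : Finset (Finset (Fin n))) : ℝ :=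
  p ^ E.card * (1 - p) ^ ((cands s n).card - E.card)

/-- `Pr[G^s(n,p) ⊨ A]` for a property `A` of (edge sets of) hypergraphs on `Fin n`. -/
noncomputable def pr (s n : ℕ) (p : ℝ) (A : Finset (Finset (Fin n)) → Prop) : ℝ :=
  ∑ E ∈ (cands s n).powerset, Set.indicator {E' | A E'} (weight s n p) E

/-- The expectation of a random variable `X` under `G^s(n,p)`. -/
noncomputable def expec (s n : ℕ) (p : ℝ) (X : Finset (Finset (Fin n)) → ℝ) : ℝ :=
  ∑ E ∈ (cands s n).powerset, weight s n p E * X E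

/-- Probability for a pair of independent random hypergraphs `G^s(n,p)`, `G^s(m,q)`. -/
noncomputable def pr2 (s n m : ℕ) (p q : ℝ)
    (A : Finset (Finset (Fin n)) → Finset (Finset (Fin m)) → Prop) : ℝ :=
  ∑ E1 ∈ (cands s n).powerset, ∑ E2 ∈ (cands s m).powerset,
    Set.indicator {E : Finset (Finset (Fin n)) × Finset (Finset (Fin m)) | A E.1 E.2}
      (fun E => weight s n p E.1 * weight s m q E.2) (E1, E2)

/-! ### First-order logic of `s`-uniform hypergraphs -/

/-- The first-order language of `s`-uniform hypergraphs: a single `s`-ary relation symbol `N`. -/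
def HLang (s : ℕ) : FirstOrder.Language := ⟨fun _ => Empty, fun k => PLift (k = s)⟩

/-- The hypergraph on vertex set `V` with edge set `E` as a structure in the language `HLang s`:
`N(x_1, …, x_s)` holds iff `{x_1, …, x_s} ∈ E`. -/
def hStructure (s : ℕ) {V : Type} [DecidableEq V] (E : Finset (Finset V)) :
    (HLang s).Structure V where
  funMap := fun f _ => f.elim
  RelMap := fun _ v => Finset.univ.image v ∈ E

/-- The quantifier depth of a first-order formula. -/
def qdepth {L : FirstOrder.Language} {α : Type} : {n : ℕ} → L.BoundedFormula α n → ℕ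
  | _, .falsum => 0
  | _, .equal _ _ => 0
  | _, .rel _ _ => 0
  | _, .imp f g => max (qdepth f) (qdepth g)
  | _, .all f => qdepth f + 1

/-- The hypergraph on `V` with edge set `E` satisfies the sentence `φ`. -/
def Sat (s : ℕ) {V : Type} [DecidableEq V] (E : Finset (Finset V))
    (φ : (HLang s).Sentence) : Prop :=
  @FirstOrder.Language.Sentence.Realize (HLang s) V (hStructure s E) φ

/-- `G^s(n, p(n))` obeys the zero-one `k`-law. -/
def ZeroOneLaw (s k : ℕ) (p : ℕ → ℝ) : Prop :=
  ∀ φ : (HLang s).Sentence, qdepth φ ≤ k →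
    Tendsto (fun n => pr s n (p n) fun E => Sat s E φ) atTop (nhds 0) ∨
    Tendsto (fun n => pr s n (p n) fun E => Sat s E φ) atTop (nhds 1)

/-- The spectrum `S_k`: all `α ∈ (0, s-1)` such that `G^s(n, n^{-α})` does not obey the
zero-one `k`-law. -/
def SpectrumSet (s k : ℕ) : Set ℝ :=
  {α : ℝ | 0 < α ∧ α < (s : ℝ) - 1 ∧ ¬ ZeroOneLaw s k fun n => (n : ℝ) ^ (-α)}

/-- The set of limit points of a set of reals. -/
def limitPts (T : Set ℝ) : Set ℝ := {x : ℝ | ∀ ε > 0, ∃ y ∈ T, y ≠ x ∧ |y - x| < ε}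

/-! ### The Ehrenfeucht game -/

/-- The list of chosen pairs induces a partial isomorphism between the hypergraphs
`(V, E1)` and `(W, E2)`. -/
def PartialIso (s : ℕ) {V W : Type} [DecidableEq V] [DecidableEq W]
    (E1 : Finset (Finset V)) (E2 : Finset (Finset W)) (L : List (V × W)) : Prop :=
  (∀ p ∈ L, ∀ q ∈ L, p.1 = q.1 ↔ p.2 = q.2) ∧
  ∀ c : Fin s → V × W, (∀ i, c i ∈ L) →
    (Finset.univ.image (fun i => (c i).1) ∈ E1 ↔ Finset.univ.image (fun i => (c i).2) ∈ E2)

/-- Duplicator has a winning strategy in the remaining `k` rounds of the Ehrenfeucht game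
`EHR` on the `s`-hypergraphs `(A, E1)` and `(B, E2)`, the list `L` of pairs having been
chosen so far. -/
def DupWins (s : ℕ) {V W : Type} [DecidableEq V] [DecidableEq W]
    (A : Finset V) (E1 : Finset (Finset V)) (B : Finset W) (E2 : Finset (Finset W)) :
    ℕ → List (V × W) → Prop
  | 0, L => PartialIso s E1 E2 L
  | (k+1), L => (∀ x ∈ A, ∃ y ∈ B, DupWins s A E1 B E2 k ((x, y) :: L)) ∧
      (∀ y ∈ B, ∃ x ∈ A, DupWins s A E1 B E2 k ((x, y) :: L))

/-! ### Extension properties -/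

/-- The full level `(k-1)` extension property for the `s`-hypergraph `(A, E)`. -/
def FullLevelExt (s k : ℕ) {V : Type} [DecidableEq V] (A : Finset V)
    (E : Finset (Finset V)) : Prop :=
  ∀ r : ℕ, s - 1 ≤ r → r ≤ k - 1 → ∀ z : Fin r → V, (∀ i, z i ∈ A) → Function.Injective z →
    ∀ 𝓐 : Finset (Finset (Fin r)), (∀ a ∈ 𝓐, a.card = s - 1) →
      ∃ w ∈ A, (∀ i, w ≠ z i) ∧
        ∀ a : Finset (Fin r), a.card = s - 1 → (insert w (a.image z) ∈ E ↔ a ∈ 𝓐)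

/-! ### Paths and distances -/

/-- There is a path of length exactly `t` (a sequence of `t` edges, consecutive ones
intersecting) connecting `a` and `b` in the hypergraph with edge set `E`. -/
def HasPath {V : Type} [DecidableEq V] (E : Finset (Finset V)) (a b : V) : ℕ → Prop
  | 0 => a = b
  | (t+1) => ∃ es : ℕ → Finset V, (∀ i ≤ t, es i ∈ E) ∧ a ∈ es 0 ∧ b ∈ es t ∧
      ∀ i, i + 1 ≤ t → (es i ∩ es (i+1)).Nonempty

/-- The hypergraph `P` is a path with `t` edges connecting `u` and `w`. -/
def IsPathHG (s : ℕ) (P : HGraph s) (u w : ℕ) (t : ℕ) : Prop :=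
  ∃ es : ℕ → Finset ℕ, Set.InjOn es (Finset.range t) ∧
    P.edges = (Finset.range t).image es ∧
    P.verts = (Finset.range t).biUnion es ∧
    (0 < t → u ∈ es 0 ∧ w ∈ es (t-1)) ∧
    ∀ i : ℕ, i + 1 < t → (es i ∩ es (i+1)).Nonempty

/-! ### Cyclic extensions and the family `𝓗_m` -/

/-- `G` is a cyclic `m`-extension of `H`. -/
def CyclicExt (s m : ℕ) (H G : HGraph s) : Prop :=
  H.Sub G ∧ HGraph.rhoMax G < (m : ℝ) / ((m : ℝ) * ((s : ℝ) - 1) - 1) ∧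
  ((∃ (k l x1 : ℕ) (y z : ℕ → ℕ) (U : Finset ℕ),
      1 ≤ k ∧ k ≤ m - 1 ∧ l < s - 1 ∧ x1 ∈ H.verts ∧
      Set.InjOn y (Finset.Icc 1 (k*(s-1))) ∧ Set.InjOn z (Finset.Icc 1 l) ∧
      (∀ i ∈ Finset.Icc 1 (k*(s-1)), y i ∉ H.verts) ∧
      (∀ j ∈ Finset.Icc 1 l, z j ∉ H.verts) ∧
      (∀ i ∈ Finset.Icc 1 (k*(s-1)), ∀ j ∈ Finset.Icc 1 l, y i ≠ z j) ∧
      G.verts = H.verts ∪ (Finset.Icc 1 (k*(s-1))).image y ∪ (Finset.Icc 1 l).image z ∧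
      U ⊆ (Finset.Icc 1 (k*(s-1) - 1)).image y ∧ U.card = s - 1 - l ∧
      G.edges = H.edges ∪
        (Finset.range k).image (fun j =>
          (Finset.Icc (j*(s-1)) ((j+1)*(s-1))).image (fun t => if t = 0 then x1 else y t)) ∪
        {insert (y (k*(s-1))) ((Finset.Icc 1 l).image z ∪ U)}) ∨
   (∃ (k l x1 x2 : ℕ) (y z : ℕ → ℕ) (U : Finset ℕ),
      1 ≤ k ∧ k ≤ m - 1 ∧ l ≤ s - 2 ∧ x1 ∈ H.verts ∧ x2 ∈ H.verts ∧ x1 ≠ x2 ∧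
      Set.InjOn y (Finset.Icc 1 (k*(s-1))) ∧ Set.InjOn z (Finset.Icc 1 l) ∧
      (∀ i ∈ Finset.Icc 1 (k*(s-1)), y i ∉ H.verts) ∧
      (∀ j ∈ Finset.Icc 1 l, z j ∉ H.verts) ∧
      (∀ i ∈ Finset.Icc 1 (k*(s-1)), ∀ j ∈ Finset.Icc 1 l, y i ≠ z j) ∧
      G.verts = H.verts ∪ (Finset.Icc 1 (k*(s-1))).image y ∪ (Finset.Icc 1 l).image z ∧
      U ⊆ (Finset.Icc 1 (k*(s-1) - 1)).image y ∧ U.card = s - 2 - l ∧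
      G.edges = H.edges ∪
        (Finset.range k).image (fun j =>
          (Finset.Icc (j*(s-1)) ((j+1)*(s-1))).image (fun t => if t = 0 then x1 else y t)) ∪
        {insert x2 (insert (y (k*(s-1))) ((Finset.Icc 1 l).image z ∪ U))}) ∨
   (∃ (l : ℕ) (X Y : Finset ℕ),
      2 ≤ l ∧ l ≤ s - 1 ∧ X ⊆ H.verts ∧ X.card = l ∧
      Disjoint Y H.verts ∧ Y.card = s - l ∧
      G.verts = H.verts ∪ Y ∧ G.edges = H.edges ∪ {X ∪ Y}))

/-- The family `𝓗_m` of `s`-hypergraphs: generated from a single vertex by cyclic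
`m`-extensions and by adding edges keeping `ρ^max < m/(m(s-1)-1)`. -/
inductive InH (s m : ℕ) : HGraph s → Prop
  | single (x : ℕ) : InH s m (singleHG s x)
  | cyc {H G : HGraph s} : InH s m H → CyclicExt s m H G → InH s m G
  | addEdges {H G : HGraph s} : InH s m H → G.verts = H.verts → H.edges ⊆ G.edges →
      HGraph.rhoMax G < (m : ℝ) / ((m : ℝ) * ((s : ℝ) - 1) - 1) → InH s m G

/-! ### Loose paths and cycles -/

/-- `P` is a loose path of length `c` from `u` to `w`. -/
def IsLoosePath (s : ℕ) (P : HGraph s) (c : ℕ) (u w : ℕ) : Prop :=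
  ∃ x : ℕ → ℕ, Set.InjOn x (Finset.range (c*(s-1)+1)) ∧
    P.verts = (Finset.range (c*(s-1)+1)).image x ∧
    P.edges = (Finset.range c).image (fun i => (Finset.range s).image (fun t => x (i*(s-1)+t))) ∧
    u = x 0 ∧ w = x (c*(s-1))

/-- `C` is a loose cycle of length `c`. -/
def IsLooseCycle (s : ℕ) (C : HGraph s) (c : ℕ) : Prop :=
  ∃ x : ℕ → ℕ, Set.InjOn x (Finset.range (c*(s-1))) ∧
    C.verts = (Finset.range (c*(s-1))).image x ∧
    C.edges = (Finset.range c).image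
      (fun i => (Finset.range s).image (fun t => x ((i*(s-1)+t) % (c*(s-1)))))


/-! ### Sparse hypergraphs -/

/-- `(K, T)` belongs to `𝓚^ρ`: a `(1/ρ)`-rigid pair with `v(K) ≤ n3`, `v(T) ≤ n4`. -/
def Krho (s : ℕ) (ρ : ℝ) (n3 n4 : ℕ) (K T : HGraph s) : Prop :=
  T.Sub K ∧ HGraph.Arigid (1/ρ) K T ∧ K.verts.card ≤ n3 ∧ T.verts.card ≤ n4

/-- The hypergraph `G` is `(n1, n2, n3, n4, ρ)`-sparse. -/
def Sparse (s n1 n2 n3 n4 : ℕ) (ρ : ℝ) (G : HGraph s) : Prop :=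
  (∀ H : HGraph s, H.verts.card ≤ n1 →
    (HGraph.rhoMax H > ρ → ¬ ContainsCopy G.verts G.edges H) ∧
    (HGraph.rhoMax H < ρ → ∃ f : ℕ → ℕ, Set.InjOn f H.verts ∧ (∀ v ∈ H.verts, f v ∈ G.verts) ∧
       (∀ e : Finset ℕ, e ⊆ H.verts → e.card = s → (e ∈ H.edges ↔ e.image f ∈ G.edges)) ∧
       ∀ K T : HGraph s, Krho s ρ n3 n4 K T →
         PairMaximal G.verts G.edges H (emptyHG s) f K T)) ∧
  (∀ H1 H2 : HGraph s, H2.Sub H1 → HGraph.Asafe (1/ρ) H1 H2 →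
    H1.verts.card ≤ n1 → H2.verts.card ≤ n2 →
    ∀ g : ℕ → ℕ, Set.InjOn g H2.verts → (∀ v ∈ H2.verts, g v ∈ G.verts) →
      ∃ f : ℕ → ℕ, (∀ v ∈ H2.verts, f v = g v) ∧ IsStrictExt G.verts G.edges H1 H2 f ∧
        ∀ K T : HGraph s, Krho s ρ n3 n4 K T → PairMaximal G.verts G.edges H1 H2 f K T)

/-! ### Counting maximal strict extensions in the random hypergraph -/

/-- `N^r_{(G,H)}(x̃_1, …, x̃_l)`: the number of strict `(G,H)`-extensions of the tuple
`g|_{V(H)}` in the hypergraph `Γ` on `Fin n` which are `(K,T)`-maximal for all `α`-rigid and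
`α`-neutral pairs `(K,T)` with `v(T) ≤ v(G)` and `v(K) - v(T) ≤ r`. -/
noncomputable def NExtCount {s : ℕ} (n : ℕ) (Γ : Finset (Finset (Fin n))) (G H : HGraph s)
    (r : ℕ) (α : ℝ) (g : ℕ → Fin n) : ℕ :=
  Set.ncard {f : ℕ → Fin n |
    (∀ v, v ∉ G.verts → f v = g v) ∧ (∀ v ∈ H.verts, f v = g v) ∧
    IsStrictExt Finset.univ Γ G H f ∧
    ∀ K T : HGraph s, T.Sub K → T.verts.card ≤ G.verts.card →
      (K.verts \ T.verts).card ≤ r →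
      (HGraph.Arigid α K T ∨ HGraph.Aneutral α K T) →
      PairMaximal Finset.univ Γ G H f K T}

/-! ### Hypergraphs as first-order structures on their own vertex set -/

/-- The hypergraph `G` as a structure in the language `HLang s` with carrier its vertex set. -/
def hgStructure (s : ℕ) (G : HGraph s) : (HLang s).Structure {x : ℕ // x ∈ G.verts} where
  funMap := fun f _ => f.elim
  RelMap := fun _ v => Finset.univ.image (fun i => (v i).1) ∈ G.edges


section SB19
set_option linter.unusedSectionVars false

lemma hg_ext {s : ℕ} {G H : HGraph s} (hv : G.verts = H.verts) (he : G.edges = H.edges) : G = H := by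
  cases G; cases H; simp_all


lemma mod_eq_cases {n a b : ℕ} (ha : a ≤ n) (hb : b ≤ n) (h : a % n = b % n) :
    a = b ∨ (a = 0 ∧ b = n) ∨ (a = n ∧ b = 0) := by
  rcases Nat.eq_zero_or_pos n with rfl | hn
  · omega
  rcases eq_or_lt_of_le ha with rfl | ha'
  · rcases eq_or_lt_of_le hb with rfl | hb'
    · left; rfl
    · rw [Nat.mod_self, Nat.mod_eq_of_lt hb'] at h; omega
  · rcases eq_or_lt_of_le hb with rfl | hb'
    · rw [Nat.mod_self, Nat.mod_eq_of_lt ha'] at h; omega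
    · rw [Nat.mod_eq_of_lt ha', Nat.mod_eq_of_lt hb'] at h; omega

lemma affine_eq {S i j t t' : ℕ} (hS : 2 ≤ S) (ht : t ≤ S) (ht' : t' ≤ S)
    (h : i*S + t = j*S + t') :
    (i = j ∧ t = t') ∨ (j = i+1 ∧ t = S ∧ t' = 0) ∨ (i = j+1 ∧ t' = S ∧ t = 0) := by
  rcases lt_trichotomy i j with hij | rfl | hij
  · right; left
    have h1 : (i+1) * S ≤ j * S := Nat.mul_le_mul_right _ (by omega)
    have h2 : (i+1) * S = i*S + S := by ring
    have h3 : t = S ∧ t' = 0 ∧ (i+1)*S = j*S := by omega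
    have h5 : i+1 = j := Nat.eq_of_mul_eq_mul_right (show 0 < S by omega) h3.2.2
    exact ⟨h5.symm, h3.1, h3.2.1⟩
  · left; omega
  · right; right
    have h1 : (j+1) * S ≤ i * S := Nat.mul_le_mul_right _ (by omega)
    have h2 : (j+1) * S = j*S + S := by ring
    have h3 : t' = S ∧ t = 0 ∧ (j+1)*S = i*S := by omega
    have h5 : j+1 = i := Nat.eq_of_mul_eq_mul_right (show 0 < S by omega) h3.2.2
    exact ⟨h5.symm, h3.1, h3.2.1⟩

lemma injOn_image_disjoint {α β : Type*} [DecidableEq α] [DecidableEq β] {f : α → β} {S : Set α}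
    (hf : Set.InjOn f S) {A B : Finset α} (hA : ↑A ⊆ S) (hB : ↑B ⊆ S) (h : Disjoint A B) :
    Disjoint (A.image f) (B.image f) := by
  simp only [Finset.disjoint_left] at h ⊢
  rintro b hb hb'
  simp only [Finset.mem_image] at hb hb'
  obtain ⟨a, ha, rfl⟩ := hb
  obtain ⟨a', ha', he⟩ := hb'
  exact h (hf (hA ha) (hB ha') he.symm ▸ ha) ha'

section cyc

variable {s c : ℕ}

lemma cyc_bound (hc : 1 ≤ c) {i t : ℕ} (hi : i < c) (ht : t ≤ s-1) : i*(s-1)+t ≤ c*(s-1) := by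
  have h1 : i*(s-1) ≤ (c-1)*(s-1) := Nat.mul_le_mul_right _ (by omega)
  have h2 : (c-1)*(s-1) + (s-1) = c*(s-1) := by
    have h3 : c - 1 + 1 = c := by omega
    calc (c-1)*(s-1) + (s-1) = (c-1+1)*(s-1) := by ring
    _ = c*(s-1) := by rw [h3]
  omega

lemma cyc_mod_eq (hs : 3 ≤ s) (hc : 2 ≤ c) {i j t t' : ℕ} (hi : i < c) (hj : j < c)
    (ht : t < s) (ht' : t' < s)
    (h : (i*(s-1)+t) % (c*(s-1)) = (j*(s-1)+t') % (c*(s-1))) :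
    i*(s-1)+t = j*(s-1)+t' ∨
    (i = 0 ∧ t = 0 ∧ j = c-1 ∧ t' = s-1) ∨ (j = 0 ∧ t' = 0 ∧ i = c-1 ∧ t = s-1) := by
  have hb1 : i*(s-1)+t ≤ c*(s-1) := cyc_bound (by omega) hi (by omega)
  have hb2 : j*(s-1)+t' ≤ c*(s-1) := cyc_bound (by omega) hj (by omega)
  rcases mod_eq_cases hb1 hb2 h with h0 | ⟨ha, hb⟩ | ⟨ha, hb⟩
  · exact Or.inl h0
  · right; left
    have hi0 : i = 0 := by
      have := Nat.eq_zero_of_add_eq_zero_right ha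
      rcases Nat.mul_eq_zero.1 this with h' | h' <;> omega
    have hj1 : (j+1)*(s-1) ≤ c*(s-1) := Nat.mul_le_mul_right _ (by omega)
    have hj2 : (j+1)*(s-1) = j*(s-1) + (s-1) := by ring
    have ht'1 : t' = s-1 ∧ (j+1)*(s-1) = c*(s-1) := by omega
    have := Nat.eq_of_mul_eq_mul_right (show 0 < s-1 by omega) ht'1.2
    exact ⟨hi0, by omega, by omega, ht'1.1⟩
  · right; right
    have hj0 : j = 0 := by
      have := Nat.eq_zero_of_add_eq_zero_right hb
      rcases Nat.mul_eq_zero.1 this with h' | h' <;> omega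
    have hi1 : (i+1)*(s-1) ≤ c*(s-1) := Nat.mul_le_mul_right _ (by omega)
    have hi2 : (i+1)*(s-1) = i*(s-1) + (s-1) := by ring
    have ht1 : t = s-1 ∧ (i+1)*(s-1) = c*(s-1) := by omega
    have := Nat.eq_of_mul_eq_mul_right (show 0 < s-1 by omega) ht1.2
    exact ⟨hj0, by omega, by omega, ht1.1⟩

end cyc

def cycE (s c : ℕ) (x : ℕ → ℕ) (i : ℕ) : Finset ℕ :=
  (Finset.range s).image (fun t => x ((i*(s-1)+t) % (c*(s-1))))

def pathE (s : ℕ) (y : ℕ → ℕ) (i : ℕ) : Finset ℕ :=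
  (Finset.range s).image (fun t => y (i*(s-1)+t))

section cycfacts

variable {s c : ℕ} (hs : 3 ≤ s) (hc : 2 ≤ c) {x : ℕ → ℕ}
  (hx : Set.InjOn x ↑(Finset.range (c*(s-1))))

include hs hc hx

lemma cycE_card {i : ℕ} (hi : i < c) : (cycE s c x i).card = s := by
  rw [cycE, Finset.card_image_of_injOn, Finset.card_range]
  intro t ht t' ht' he
  simp only [Finset.coe_range, Set.mem_Iio] at ht ht'
  have hn : 0 < c*(s-1) := Nat.mul_pos (by omega) (by omega)
  have h1 : (i*(s-1)+t) % (c*(s-1)) = (i*(s-1)+t') % (c*(s-1)) :=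
    hx (by simp [Nat.mod_lt _ hn]) (by simp [Nat.mod_lt _ hn]) he
  rcases cyc_mod_eq hs hc hi hi ht ht' h1 with h0 | h0 | h0 <;> omega

lemma cycE_injOn : Set.InjOn (cycE s c x) ↑(Finset.range c) := by
  intro i hi j hj he
  simp only [Finset.coe_range, Set.mem_Iio] at hi hj
  have hn : 0 < c*(s-1) := Nat.mul_pos (by omega) (by omega)
  have hmem : x ((i*(s-1)+1) % (c*(s-1))) ∈ cycE s c x i := by
    simp only [cycE, Finset.mem_image]
    exact ⟨1, by simp; omega, rfl⟩
  rw [he] at hmem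
  simp only [cycE, Finset.mem_image, Finset.mem_range] at hmem
  obtain ⟨t', ht', hv⟩ := hmem
  have h1 : (j*(s-1)+t') % (c*(s-1)) = (i*(s-1)+1) % (c*(s-1)) :=
    hx (by simp [Nat.mod_lt _ hn]) (by simp [Nat.mod_lt _ hn]) hv
  rcases cyc_mod_eq hs hc hj hi ht' (by omega) h1 with h0 | h0 | h0
  · rcases affine_eq (show 2 ≤ s-1 by omega) (show t' ≤ s-1 by omega)
      (show 1 ≤ s-1 by omega) h0 with h2 | h2 | h2 <;> omega
  · omega
  · omega

lemma cycE_subset {i : ℕ} : cycE s c x i ⊆ (Finset.range (c*(s-1))).image x := by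
  intro v hv
  simp only [cycE, Finset.mem_image, Finset.mem_range] at hv ⊢
  obtain ⟨t, ht, rfl⟩ := hv
  exact ⟨_, Nat.mod_lt _ (Nat.mul_pos (by omega) (by omega)), rfl⟩

lemma cycE_cover {r : ℕ} (hr : r < c*(s-1)) : ∃ i, i < c ∧ x r ∈ cycE s c x i := by
  have hS : 0 < s-1 := by omega
  refine ⟨r / (s-1), (Nat.div_lt_iff_lt_mul hS).2 hr, ?_⟩
  simp only [cycE, Finset.mem_image, Finset.mem_range]
  refine ⟨r % (s-1), by have := Nat.mod_lt r hS; omega, ?_⟩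
  rw [Nat.div_add_mod' r (s-1), Nat.mod_eq_of_lt hr]

/-- plain cycle blocks -/
def cycB (s c : ℕ) (x : ℕ → ℕ) (i : ℕ) : Finset ℕ :=
  (Finset.Icc 1 (s-1)).image (fun t => x ((i*(s-1)+t) % (c*(s-1))))

lemma cycB_subset {i : ℕ} : cycB s c x i ⊆ cycE s c x i := by
  intro v hv
  simp only [cycB, cycE, Finset.mem_image, Finset.mem_Icc, Finset.mem_range] at hv ⊢
  obtain ⟨t, ht, rfl⟩ := hv
  exact ⟨t, by omega, rfl⟩

lemma cycB_card {i : ℕ} (hi : i < c) : (cycB s c x i).card = s - 1 := by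
  rw [cycB, Finset.card_image_of_injOn, Nat.card_Icc]
  · omega
  intro t ht t' ht' he
  simp only [Finset.coe_Icc, Set.mem_Icc] at ht ht'
  have hn : 0 < c*(s-1) := Nat.mul_pos (by omega) (by omega)
  have h1 : (i*(s-1)+t) % (c*(s-1)) = (i*(s-1)+t') % (c*(s-1)) :=
    hx (by simp [Nat.mod_lt _ hn]) (by simp [Nat.mod_lt _ hn]) he
  rcases cyc_mod_eq hs hc hi hi (by omega) (by omega) h1 with h0 | h0 | h0 <;> omega

lemma cycB_disjoint {i j : ℕ} (hi : i < c) (hj : j < c) (hij : i ≠ j) :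
    Disjoint (cycB s c x i) (cycB s c x j) := by
  rw [Finset.disjoint_left]
  intro v hv hv'
  simp only [cycB, Finset.mem_image, Finset.mem_Icc] at hv hv'
  obtain ⟨t, ht, rfl⟩ := hv
  obtain ⟨t', ht', hv⟩ := hv'
  have hn : 0 < c*(s-1) := Nat.mul_pos (by omega) (by omega)
  have h1 : (j*(s-1)+t') % (c*(s-1)) = (i*(s-1)+t) % (c*(s-1)) :=
    hx (by simp [Nat.mod_lt _ hn]) (by simp [Nat.mod_lt _ hn]) hv
  rcases cyc_mod_eq hs hc hj hi (by omega) (by omega) h1 with h0 | h0 | h0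
  · rcases affine_eq (show 2 ≤ s-1 by omega) (show t' ≤ s-1 by omega)
      (show t ≤ s-1 by omega) h0 with h2 | h2 | h2 <;> omega
  · omega
  · omega

end cycfacts

/-- clamped interval block -/
def pB (S r i : ℕ) : Finset ℕ :=
  (Finset.Icc (i*S) ((i+1)*S)).erase (min (max r (i*S)) ((i+1)*S))

lemma pB_subset {S r i : ℕ} : pB S r i ⊆ Finset.Icc (i*S) ((i+1)*S) := Finset.erase_subset _ _

lemma pB_card {S r i : ℕ} (hS : 1 ≤ S) : (pB S r i).card = S := by
  have h1 : (i+1)*S = i*S + S := by ring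
  have hmem : min (max r (i*S)) ((i+1)*S) ∈ Finset.Icc (i*S) ((i+1)*S) := by
    simp only [Finset.mem_Icc]; omega
  rw [pB, Finset.card_erase_of_mem hmem, Nat.card_Icc]
  omega

lemma pB_avoid {S r i : ℕ} : r ∉ pB S r i := by
  simp only [pB, Finset.mem_erase, Finset.mem_Icc]
  omega

lemma pB_disjoint_lt {S r i j : ℕ} (hij : i < j) : Disjoint (pB S r i) (pB S r j) := by
  rw [Finset.disjoint_left]
  intro a ha ha'
  have h1 := pB_subset ha
  have h2 := pB_subset ha'
  simp only [Finset.mem_Icc] at h1 h2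
  have e1 : (i+1)*S = i*S + S := by ring
  have e2 : (j+1)*S = j*S + S := by ring
  have h3 : (i+1)*S ≤ j*S := Nat.mul_le_mul_right _ (by omega)
  have ha1 : a = (i+1)*S ∧ a = j*S := by omega
  simp only [pB, Finset.mem_erase] at ha ha'
  rcases le_total r a with hr | hr
  · have : min (max r (j*S)) ((j+1)*S) = j*S := by omega
    omega
  · have : min (max r (i*S)) ((i+1)*S) = (i+1)*S := by omega
    omega

lemma pB_disjoint {S r i j : ℕ} (hij : i ≠ j) : Disjoint (pB S r i) (pB S r j) := by
  rcases Nat.lt_or_ge i j with h | h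
  · exact pB_disjoint_lt h
  · exact (pB_disjoint_lt (by omega)).symm

lemma mod_add_inj {c e a b : ℕ} (ha : a < c) (hb : b < c) (h : (a+e) % c = (b+e) % c) :
    a = b := by
  have h2 : a ≡ b [MOD c] := Nat.ModEq.add_right_cancel (Nat.ModEq.refl e) h
  rwa [Nat.ModEq, Nat.mod_eq_of_lt ha, Nat.mod_eq_of_lt hb] at h2

lemma cyc_avoid {s c : ℕ} (hs : 3 ≤ s) (hc : 2 ≤ c) {x : ℕ → ℕ}
    (hx : Set.InjOn x ↑(Finset.range (c*(s-1))))
    {j0 r : ℕ} (hj0 : j0 < c) (hr : r < c*(s-1)) :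
    ∃ B : ℕ → Finset ℕ,
      (∀ i, i < c → i ≠ j0 → (B i).card = s-1 ∧ B i ⊆ cycE s c x i ∧ x r ∉ B i) ∧
      (∀ i j, i < c → j < c → i ≠ j0 → j ≠ j0 → i ≠ j → Disjoint (B i) (B j)) := by
  set S := s - 1 with hSdef
  set n := c * S with hndef
  have hS : 2 ≤ S := by omega
  have hn : 0 < n := Nat.mul_pos (by omega) (by omega)
  set d := ((j0+1)*S) % n with hddef
  have hd : d < n := Nat.mod_lt _ hn
  set z : ℕ → ℕ := fun p => x ((p + d) % n) with hzdef
  set k : ℕ → ℕ := fun i => (i + (c-1-j0)) % c with hkdef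
  set r2 := (r + (n - d)) % n with hr2def
  have hr2 : r2 < n := Nat.mod_lt _ (by omega)
  have hzinj : Set.InjOn z ↑(Finset.range n) := by
    intro p hp p' hp' he
    simp only [Finset.coe_range, Set.mem_Iio] at hp hp'
    have h1 : (p + d) % n = (p' + d) % n :=
      hx (by simp [Nat.mod_lt _ hn]) (by simp [Nat.mod_lt _ hn]) he
    exact mod_add_inj hp hp' h1
  have hkc : ∀ i, i < c → k i < c := fun i _ => Nat.mod_lt _ (by omega)
  have hkinj : ∀ i j, i < c → j < c → i ≠ j → k i ≠ k j := by
    intro i j hi hj hij he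
    exact hij (mod_add_inj hi hj he)
  have hkne : ∀ i, i < c → i ≠ j0 → k i ≤ c - 2 := by
    intro i hi hij
    have h1 : k i < c := hkc i hi
    have h2 : k j0 = c - 1 := by
      show (j0 + (c-1-j0)) % c = c - 1
      have : j0 + (c-1-j0) = c - 1 := by omega
      rw [this, Nat.mod_eq_of_lt (by omega)]
    have h3 : k i ≠ c - 1 := fun he => hij (mod_add_inj hi hj0 (he.trans h2.symm))
    omega
  have hkey : ∀ i, i < c → ∀ t, (k i * S + t + d) % n = (i * S + t) % n := by
    intro i hi t
    have h1 : (k i + (j0 + 1)) ≡ (i + c) [MOD c] := by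
      calc (k i + (j0+1)) ≡ (i + (c-1-j0)) + (j0+1) [MOD c] :=
            Nat.ModEq.add_right _ (Nat.mod_modEq _ c)
      _ = i + c := by omega
    have h2 : (k i + (j0 + 1)) ≡ i [MOD c] := by
      have h3 : (i + c) ≡ i [MOD c] := by
        show (i + c) % c = i % c
        exact Nat.add_mod_right i c
      exact h1.trans h3
    have h4 : (k i + (j0 + 1)) * S ≡ i * S [MOD n] := Nat.ModEq.mul_right' S h2
    have h5 : (k i * S + t + d) ≡ (i * S + t) [MOD n] := by
      calc (k i * S + t + d) ≡ (k i * S + t + (j0+1)*S) [MOD n] :=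
            Nat.ModEq.add_left _ (Nat.mod_modEq _ n)
      _ = (k i + (j0+1)) * S + t := by ring
      _ ≡ i * S + t [MOD n] := Nat.ModEq.add_right _ h4
    exact h5
  have hzr2 : z r2 = x r := by
    have h1 : (r2 + d) % n = r := by
      have h2 : (r2 + d) ≡ (r + (n - d)) + d [MOD n] := Nat.ModEq.add_right _ (Nat.mod_modEq _ n)
      have h3 : r + (n - d) + d = r + n := by omega
      have h4 : (r + n) % n = r := by rw [Nat.add_mod_right, Nat.mod_eq_of_lt hr]
      rw [Nat.ModEq, h3] at h2
      rw [h2, h4]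
    show x ((r2 + d) % n) = x r
    rw [h1]
  have hpBsub : ∀ i, i < c → i ≠ j0 → ↑(pB S r2 (k i)) ⊆ (↑(Finset.range n) : Set ℕ) := by
    intro i hi hij p hp
    have h1 := pB_subset hp
    simp only [Finset.mem_Icc] at h1
    have h2 : k i + 1 ≤ c - 1 := by have := hkne i hi hij; omega
    have h3 : (k i + 1) * S ≤ (c-1) * S := Nat.mul_le_mul_right _ h2
    have h4 : (c-1) * S < c * S := by
      have : (0:ℕ) < S := by omega
      exact (Nat.mul_lt_mul_right this).2 (by omega)
    simp only [Finset.coe_range, Set.mem_Iio]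
    omega
  refine ⟨fun i => (pB S r2 (k i)).image z, ?_, ?_⟩
  · intro i hi hij
    refine ⟨?_, ?_, ?_⟩
    · rw [Finset.card_image_of_injOn (hzinj.mono (hpBsub i hi hij)), pB_card (by omega)]
    · intro v hv
      simp only [Finset.mem_image] at hv
      obtain ⟨p, hp, rfl⟩ := hv
      have h1 := pB_subset hp
      simp only [Finset.mem_Icc] at h1
      have e1 : (k i + 1) * S = k i * S + S := by ring
      set t := p - k i * S with htdef
      have h2 : p = k i * S + t := by omega
      have h3 : t < s := by omega
      simp only [cycE, Finset.mem_image, Finset.mem_range]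
      refine ⟨t, h3, ?_⟩
      show x ((i * (s-1) + t) % (c * (s-1))) = z p
      rw [hzdef]
      simp only []
      rw [h2, hkey i hi t]
    · intro hmem
      simp only [Finset.mem_image] at hmem
      obtain ⟨p, hp, hzp⟩ := hmem
      have h1 : z p = z r2 := by rw [hzp, hzr2]
      have h2 : p = r2 := hzinj (hpBsub i hi hij hp) (by simp [hr2]) h1
      exact pB_avoid (h2 ▸ hp)
  · intro i j hi hj hi0 hj0' hij
    exact injOn_image_disjoint hzinj (hpBsub i hi hi0) (hpBsub j hj hj0')
      (pB_disjoint (hkinj i j hi hj hij))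

section pathfacts

variable {s c : ℕ} (hs : 3 ≤ s) (hc : 1 ≤ c) {y : ℕ → ℕ}
  (hy : Set.InjOn y ↑(Finset.range (c*(s-1)+1)))

include hs hc hy

lemma pathE_card {i : ℕ} (hi : i < c) : (pathE s y i).card = s := by
  rw [pathE, Finset.card_image_of_injOn, Finset.card_range]
  intro t ht t' ht' he
  simp only [Finset.coe_range, Set.mem_Iio] at ht ht'
  have hb : i*(s-1)+t ≤ c*(s-1) := cyc_bound hc hi (by omega)
  have hb' : i*(s-1)+t' ≤ c*(s-1) := cyc_bound hc hi (by omega)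
  have := hy (by simp; omega) (by simp; omega) he
  omega

lemma pathE_injOn : Set.InjOn (pathE s y) ↑(Finset.range c) := by
  intro i hi j hj he
  simp only [Finset.coe_range, Set.mem_Iio] at hi hj
  have hb : i*(s-1)+1 ≤ c*(s-1) := cyc_bound hc hi (by omega)
  have hmem : y (i*(s-1)+1) ∈ pathE s y i := by
    simp only [pathE, Finset.mem_image, Finset.mem_range]
    exact ⟨1, by omega, rfl⟩
  rw [he] at hmem
  simp only [pathE, Finset.mem_image, Finset.mem_range] at hmem
  obtain ⟨t', ht', hv⟩ := hmem
  have hb' : j*(s-1)+t' ≤ c*(s-1) := cyc_bound hc hj (by omega)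
  have h0 := hy (by simp; omega) (by simp; omega) hv
  rcases affine_eq (show 2 ≤ s-1 by omega) (show t' ≤ s-1 by omega)
    (show 1 ≤ s-1 by omega) h0 with h2 | h2 | h2 <;> omega

lemma pathE_subset {i : ℕ} (hi : i < c) :
    pathE s y i ⊆ (Finset.range (c*(s-1)+1)).image y := by
  intro v hv
  simp only [pathE, Finset.mem_image, Finset.mem_range] at hv ⊢
  obtain ⟨t, ht, rfl⟩ := hv
  exact ⟨_, by have := cyc_bound hc hi (show t ≤ s-1 by omega); omega, rfl⟩

lemma pathE_cover {r : ℕ} (hr : r ≤ c*(s-1)) : ∃ i, i < c ∧ y r ∈ pathE s y i := by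
  have hS : 0 < s-1 := by omega
  rcases eq_or_lt_of_le hr with rfl | hr'
  · refine ⟨c-1, by omega, ?_⟩
    simp only [pathE, Finset.mem_image, Finset.mem_range]
    refine ⟨s-1, by omega, ?_⟩
    have : (c-1)*(s-1) + (s-1) = c*(s-1) := by
      have h3 : c - 1 + 1 = c := by omega
      calc (c-1)*(s-1) + (s-1) = (c-1+1)*(s-1) := by ring
      _ = c*(s-1) := by rw [h3]
    rw [this]
  · refine ⟨r / (s-1), (Nat.div_lt_iff_lt_mul hS).2 hr', ?_⟩
    simp only [pathE, Finset.mem_image, Finset.mem_range]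
    refine ⟨r % (s-1), by have := Nat.mod_lt r hS; omega, ?_⟩
    rw [Nat.div_add_mod' r (s-1)]

end pathfacts

/-- path index blocks: `Ioc` left of `i0`, `Ico` from `i0` on -/
def pA (S i0 i : ℕ) : Finset ℕ :=
  if i < i0 then Finset.Ioc (i*S) ((i+1)*S) else Finset.Ico (i*S) ((i+1)*S)

lemma pA_card {S i0 i : ℕ} : (pA S i0 i).card = S := by
  have e1 : (i+1)*S = i*S + S := by ring
  rw [pA]
  split_ifs <;> [rw [Nat.card_Ioc]; rw [Nat.card_Ico]] <;> omega

lemma pA_sub {S i0 i : ℕ} : pA S i0 i ⊆ Finset.Icc (i*S) ((i+1)*S) := by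
  rw [pA]
  split_ifs
  · exact Finset.Ioc_subset_Icc_self
  · exact Finset.Ico_subset_Icc_self

lemma pA_disjoint_lt {S i0 i j : ℕ} (hS : 1 ≤ S) (hij : i < j) (hcond : ¬(i < i0 ∧ i0 = j)) :
    Disjoint (pA S i0 i) (pA S i0 j) := by
  rw [Finset.disjoint_left]
  intro a ha ha'
  have e1 : (i+1)*S = i*S + S := by ring
  have e2 : (j+1)*S = j*S + S := by ring
  have h3 : (i+1)*S ≤ j*S := Nat.mul_le_mul_right _ (by omega)
  by_cases hi : i < i0 <;> by_cases hj : j < i0 <;>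
    simp only [pA, if_pos, if_neg, hi, hj, if_true, if_false, Finset.mem_Ioc, Finset.mem_Ico] at ha ha'
  · omega
  · have h5 : i+1 < j := by omega
    have h4 : (i+1)*S < j*S := (Nat.mul_lt_mul_right (show 0 < S by omega)).2 h5
    omega
  · omega
  · omega

lemma pA_disjoint {S i0 i j : ℕ} (hS : 1 ≤ S) (hij : i ≠ j)
    (hcond : ¬(i < i0 ∧ i0 = j)) (hcond' : ¬(j < i0 ∧ i0 = i)) :
    Disjoint (pA S i0 i) (pA S i0 j) := by
  rcases Nat.lt_or_ge i j with h | h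
  · exact pA_disjoint_lt hS h hcond
  · exact (pA_disjoint_lt hS (by omega) hcond').symm

lemma biUnion_card_eq {I : Finset ℕ} {B : ℕ → Finset ℕ} {m : ℕ}
    (hc : ∀ i ∈ I, (B i).card = m)
    (hd : ∀ i ∈ I, ∀ j ∈ I, i ≠ j → Disjoint (B i) (B j)) :
    (I.biUnion B).card = I.card * m := by
  rw [Finset.card_biUnion hd, Finset.sum_congr rfl hc, Finset.sum_const, smul_eq_mul]

lemma tripleCard {V A1 A2 A3 : Finset ℕ} (s1 : A1 ⊆ V) (s2 : A2 ⊆ V) (s3 : A3 ⊆ V)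
    (d12 : Disjoint A1 A2) (d13 : Disjoint A1 A3) (d23 : Disjoint A2 A3) :
    A1.card + A2.card + A3.card ≤ V.card := by
  have h1 : (A1 ∪ A2 ∪ A3).card = A1.card + A2.card + A3.card := by
    rw [Finset.card_union_of_disjoint (Finset.disjoint_union_left.2 ⟨d13, d23⟩),
      Finset.card_union_of_disjoint d12]
  rw [← h1]
  refine Finset.card_le_card ?_
  intro a ha
  rcases Finset.mem_union.1 ha with h | h
  · rcases Finset.mem_union.1 h with h' | h'
    exacts [s1 h', s2 h']
  · exact s3 h

end SB19

/-- The union `K` of two vertex-disjoint loose cycles of lengths `c_1, c_2` joined by a loose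
path of length `c_3` (internally disjoint from the cycles) satisfies `e(K) = c_1 + c_2 + c_3`,
`v(K) = e(K)(s-1) - 1`, is strictly balanced, and `1/ρ(K) = s - 1 - 1/(c_1 + c_2 + c_3)`. -/
theorem statement19 (s : ℕ) (hs : 3 ≤ s) (c1 c2 c3 : ℕ)
    (h1 : 2 ≤ c1) (h2 : 2 ≤ c2) (h3 : 1 ≤ c3)
    (K C1 C2 P : HGraph s) (u w : ℕ)
    (hC1 : IsLooseCycle s C1 c1) (hC2 : IsLooseCycle s C2 c2)
    (hdisj : Disjoint C1.verts C2.verts)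
    (hP : IsLoosePath s P c3 u w) (hu : u ∈ C1.verts) (hw : w ∈ C2.verts)
    (hint : ∀ v ∈ P.verts, v ≠ u → v ≠ w → v ∉ C1.verts ∪ C2.verts)
    (hKv : K.verts = C1.verts ∪ C2.verts ∪ P.verts)
    (hKe : K.edges = C1.edges ∪ C2.edges ∪ P.edges) :
    K.edges.card = c1 + c2 + c3 ∧
    K.verts.card = K.edges.card * (s - 1) - 1 ∧
    K.StrictlyBalanced ∧
    1 / K.rho = (s : ℝ) - 1 - 1/((c1 : ℝ) + (c2 : ℝ) + (c3 : ℝ)) := by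
  classical
  obtain ⟨x1, hx1i, hx1v, hx1e⟩ := hC1
  obtain ⟨x2, hx2i, hx2v, hx2e⟩ := hC2
  obtain ⟨y, hyi, hyv, hye, hu0, hw0⟩ := hP
  have hx1e' : C1.edges = (Finset.range c1).image (cycE s c1 x1) := hx1e
  have hx2e' : C2.edges = (Finset.range c2).image (cycE s c2 x2) := hx2e
  have hye' : P.edges = (Finset.range c3).image (pathE s y) := hye
  set n1 := c1 * (s-1) with hn1
  set n2 := c2 * (s-1) with hn2
  set N := c3 * (s-1) with hN
  have hSS : 2 ≤ s - 1 := by omega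
  have hNe : N = (c3-1)*(s-1) + (s-1) := by
    have h3' : c3 - 1 + 1 = c3 := by omega
    calc N = (c3-1+1)*(s-1) := by rw [h3']
    _ = (c3-1)*(s-1) + (s-1) := by ring
  have hV1c : C1.verts.card = n1 := by
    rw [hx1v, Finset.card_image_of_injOn hx1i, Finset.card_range]
  have hV2c : C2.verts.card = n2 := by
    rw [hx2v, Finset.card_image_of_injOn hx2i, Finset.card_range]
  have hVPc : P.verts.card = N + 1 := by
    rw [hyv, Finset.card_image_of_injOn hyi, Finset.card_range]
  have huw : u ≠ w := by
    intro h
    exact Finset.disjoint_left.1 hdisj hu (h ▸ hw)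
  have hInt : ∀ p, 1 ≤ p → p < N → y p ∉ C1.verts ∧ y p ∉ C2.verts := by
    intro p hp1 hp2
    have hyP : y p ∈ P.verts := by
      rw [hyv]
      exact Finset.mem_image_of_mem _ (Finset.mem_range.2 (by omega))
    have hne1 : y p ≠ u := by
      rw [hu0]
      intro h
      have := hyi (by simp only [Finset.coe_range, Set.mem_Iio]; omega)
        (by simp only [Finset.coe_range, Set.mem_Iio]; omega) h
      omega
    have hne2 : y p ≠ w := by
      rw [hw0]
      intro h
      have := hyi (by simp only [Finset.coe_range, Set.mem_Iio]; omega)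
        (by simp only [Finset.coe_range, Set.mem_Iio]; omega) h
      omega
    have h5 := hint _ hyP hne1 hne2
    rw [Finset.mem_union] at h5
    exact ⟨fun hc => h5 (Or.inl hc), fun hc => h5 (Or.inr hc)⟩
  have hD12 : Disjoint C1.edges C2.edges := by
    rw [Finset.disjoint_left]
    intro e he1 he2
    have hcard := C1.edge_card e he1
    have hsub1 := C1.edge_sub e he1
    have hsub2 := C2.edge_sub e he2
    obtain ⟨v, hv⟩ := Finset.card_pos.1 (show 0 < e.card by omega)
    exact Finset.disjoint_left.1 hdisj (hsub1 hv) (hsub2 hv)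
  have hintP : ∀ j, j < c3 → y (j*(s-1)+1) ∈ pathE s y j ∧
      y (j*(s-1)+1) ∉ C1.verts ∧ y (j*(s-1)+1) ∉ C2.verts := by
    intro j hj
    have hb : j*(s-1) ≤ (c3-1)*(s-1) := Nat.mul_le_mul_right _ (by omega)
    have hmem : y (j*(s-1)+1) ∈ pathE s y j := by
      simp only [pathE, Finset.mem_image, Finset.mem_range]
      exact ⟨1, by omega, rfl⟩
    exact ⟨hmem, hInt _ (by omega) (by omega)⟩
  have hD13 : Disjoint C1.edges P.edges := by
    rw [Finset.disjoint_left]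
    intro e he1 he2
    rw [hye'] at he2
    obtain ⟨j, hj, rfl⟩ := Finset.mem_image.1 he2
    rw [Finset.mem_range] at hj
    obtain ⟨hmem, hnc1, _⟩ := hintP j hj
    exact hnc1 (C1.edge_sub _ he1 hmem)
  have hD23 : Disjoint C2.edges P.edges := by
    rw [Finset.disjoint_left]
    intro e he1 he2
    rw [hye'] at he2
    obtain ⟨j, hj, rfl⟩ := Finset.mem_image.1 he2
    rw [Finset.mem_range] at hj
    obtain ⟨hmem, _, hnc2⟩ := hintP j hj
    exact hnc2 (C2.edge_sub _ he1 hmem)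
  have hC1c : C1.edges.card = c1 := by
    rw [hx1e', Finset.card_image_of_injOn (cycE_injOn hs h1 hx1i), Finset.card_range]
  have hC2c : C2.edges.card = c2 := by
    rw [hx2e', Finset.card_image_of_injOn (cycE_injOn hs h2 hx2i), Finset.card_range]
  have hPc : P.edges.card = c3 := by
    rw [hye', Finset.card_image_of_injOn (pathE_injOn hs h3 hyi), Finset.card_range]
  have hEc : K.edges.card = c1 + c2 + c3 := by
    rw [hKe, Finset.card_union_of_disjoint (Finset.disjoint_union_left.2 ⟨hD13, hD23⟩),
      Finset.card_union_of_disjoint hD12, hC1c, hC2c, hPc]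
  have hVV : (C1.verts ∪ C2.verts) ∩ P.verts = {u, w} := by
    ext v
    simp only [Finset.mem_inter, Finset.mem_union, Finset.mem_insert, Finset.mem_singleton]
    constructor
    · rintro ⟨hv1, hvP⟩
      rw [hyv] at hvP
      obtain ⟨p, hp, rfl⟩ := Finset.mem_image.1 hvP
      rw [Finset.mem_range] at hp
      rcases Nat.eq_zero_or_pos p with rfl | hp0
      · left; rw [hu0]
      rcases Nat.lt_or_ge p N with hpN | hpN
      · exact absurd hv1 (by have := hInt p (by omega) hpN; tauto)
      · right
        have hpN' : p = N := by omega
        rw [hpN', hw0]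
    · rintro (rfl | rfl)
      · refine ⟨Or.inl hu, ?_⟩
        rw [hyv, hu0]
        exact Finset.mem_image_of_mem _ (Finset.mem_range.2 (by omega))
      · refine ⟨Or.inr hw, ?_⟩
        rw [hyv, hw0]
        exact Finset.mem_image_of_mem _ (Finset.mem_range.2 (by omega))
  have hVc : K.verts.card = (c1 + c2 + c3) * (s-1) - 1 := by
    have h12 : (C1.verts ∪ C2.verts).card = n1 + n2 := by
      rw [Finset.card_union_of_disjoint hdisj, hV1c, hV2c]
    have h4 := Finset.card_union_add_card_inter (C1.verts ∪ C2.verts) P.verts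
    rw [hVV, h12, hVPc, Finset.card_pair huw] at h4
    have h5 : (c1+c2+c3)*(s-1) = n1 + n2 + N := by rw [hn1, hn2, hN]; ring
    have h6 : K.verts.card = (C1.verts ∪ C2.verts ∪ P.verts).card := by rw [hKv]
    omega
  have hcover : ∀ v ∈ K.verts, ∃ e ∈ K.edges, v ∈ e := by
    intro v hv
    rw [hKv] at hv
    simp only [Finset.mem_union] at hv
    rcases hv with (hv | hv) | hv
    · rw [hx1v] at hv
      obtain ⟨r, hr, rfl⟩ := Finset.mem_image.1 hv
      rw [Finset.mem_range] at hr
      obtain ⟨i, hi, hmem⟩ := cycE_cover hs h1 hx1i hr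
      refine ⟨cycE s c1 x1 i, ?_, hmem⟩
      rw [hKe]
      exact Finset.mem_union_left _ (Finset.mem_union_left _
        (hx1e' ▸ Finset.mem_image_of_mem _ (Finset.mem_range.2 hi)))
    · rw [hx2v] at hv
      obtain ⟨r, hr, rfl⟩ := Finset.mem_image.1 hv
      rw [Finset.mem_range] at hr
      obtain ⟨i, hi, hmem⟩ := cycE_cover hs h2 hx2i hr
      refine ⟨cycE s c2 x2 i, ?_, hmem⟩
      rw [hKe]
      exact Finset.mem_union_left _ (Finset.mem_union_right _
        (hx2e' ▸ Finset.mem_image_of_mem _ (Finset.mem_range.2 hi)))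
    · rw [hyv] at hv
      obtain ⟨r, hr, rfl⟩ := Finset.mem_image.1 hv
      rw [Finset.mem_range] at hr
      obtain ⟨i, hi, hmem⟩ := pathE_cover hs h3 hyi (show r ≤ c3*(s-1) by omega)
      refine ⟨pathE s y i, ?_, hmem⟩
      rw [hKe]
      exact Finset.mem_union_right _
        (hye' ▸ Finset.mem_image_of_mem _ (Finset.mem_range.2 hi))
  -- THE KEY COUNTING LEMMA
  have hkey : ∀ (W : Finset ℕ) (F : Finset (Finset ℕ)), F ⊆ K.edges → (∀ e ∈ F, e ⊆ W) →
      F ≠ K.edges → F.card * (s-1) ≤ W.card := by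
    intro W F hFK hFW hFne
    set I1 := (Finset.range c1).filter (fun i => cycE s c1 x1 i ∈ F) with hI1
    set I2 := (Finset.range c2).filter (fun i => cycE s c2 x2 i ∈ F) with hI2
    set I3 := (Finset.range c3).filter (fun i => pathE s y i ∈ F) with hI3
    have hI1r : ∀ i ∈ I1, i < c1 ∧ cycE s c1 x1 i ∈ F := by
      intro i hi; rw [hI1, Finset.mem_filter, Finset.mem_range] at hi; exact hi
    have hI2r : ∀ i ∈ I2, i < c2 ∧ cycE s c2 x2 i ∈ F := by
      intro i hi; rw [hI2, Finset.mem_filter, Finset.mem_range] at hi; exact hi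
    have hI3r : ∀ i ∈ I3, i < c3 ∧ pathE s y i ∈ F := by
      intro i hi; rw [hI3, Finset.mem_filter, Finset.mem_range] at hi; exact hi
    have hFsplit : F = I1.image (cycE s c1 x1) ∪ I2.image (cycE s c2 x2) ∪
        I3.image (pathE s y) := by
      ext e
      simp only [Finset.mem_union]
      constructor
      · intro he
        have h0 := hFK he
        rw [hKe] at h0
        simp only [Finset.mem_union] at h0
        rcases h0 with (h0 | h0) | h0
        · rw [hx1e'] at h0
          obtain ⟨i, hi, rfl⟩ := Finset.mem_image.1 h0
          exact Or.inl (Or.inl (Finset.mem_image_of_mem _ (by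
            rw [hI1, Finset.mem_filter]; exact ⟨hi, he⟩)))
        · rw [hx2e'] at h0
          obtain ⟨i, hi, rfl⟩ := Finset.mem_image.1 h0
          exact Or.inl (Or.inr (Finset.mem_image_of_mem _ (by
            rw [hI2, Finset.mem_filter]; exact ⟨hi, he⟩)))
        · rw [hye'] at h0
          obtain ⟨i, hi, rfl⟩ := Finset.mem_image.1 h0
          exact Or.inr (Finset.mem_image_of_mem _ (by
            rw [hI3, Finset.mem_filter]; exact ⟨hi, he⟩))
      · intro he
        rcases he with (he | he) | he <;> obtain ⟨i, hi, rfl⟩ := Finset.mem_image.1 he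
        · exact (hI1r i hi).2
        · exact (hI2r i hi).2
        · exact (hI3r i hi).2
    have hI1coe : (↑I1 : Set ℕ) ⊆ ↑(Finset.range c1) := by
      intro i hi
      simp only [Finset.mem_coe] at hi
      simp only [Finset.coe_range, Set.mem_Iio]
      exact (hI1r i hi).1
    have hI2coe : (↑I2 : Set ℕ) ⊆ ↑(Finset.range c2) := by
      intro i hi
      simp only [Finset.mem_coe] at hi
      simp only [Finset.coe_range, Set.mem_Iio]
      exact (hI2r i hi).1
    have hI3coe : (↑I3 : Set ℕ) ⊆ ↑(Finset.range c3) := by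
      intro i hi
      simp only [Finset.mem_coe] at hi
      simp only [Finset.coe_range, Set.mem_Iio]
      exact (hI3r i hi).1
    have hs1 : I1.image (cycE s c1 x1) ⊆ C1.edges := by
      rw [hx1e']
      exact Finset.image_subset_image (Finset.filter_subset _ _)
    have hs2 : I2.image (cycE s c2 x2) ⊆ C2.edges := by
      rw [hx2e']
      exact Finset.image_subset_image (Finset.filter_subset _ _)
    have hs3 : I3.image (pathE s y) ⊆ P.edges := by
      rw [hye']
      exact Finset.image_subset_image (Finset.filter_subset _ _)
    have hFc : F.card = I1.card + I2.card + I3.card := by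
      rw [hFsplit,
        Finset.card_union_of_disjoint (Finset.disjoint_union_left.2
          ⟨hD13.mono hs1 hs3, hD23.mono hs2 hs3⟩),
        Finset.card_union_of_disjoint (hD12.mono hs1 hs2),
        Finset.card_image_of_injOn ((cycE_injOn hs h1 hx1i).mono hI1coe),
        Finset.card_image_of_injOn ((cycE_injOn hs h2 hx2i).mono hI2coe),
        Finset.card_image_of_injOn ((pathE_injOn hs h3 hyi).mono hI3coe)]
    obtain ⟨e0, he0K, he0F⟩ : ∃ e ∈ K.edges, e ∉ F := by
      by_contra hcon
      push_neg at hcon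
      exact hFne (Finset.Subset.antisymm hFK hcon)
    have hfinal : ∀ (B1 B2 B3 : ℕ → Finset ℕ),
        (∀ i ∈ I1, (B1 i).card = s-1 ∧ B1 i ⊆ cycE s c1 x1 i) →
        (∀ i ∈ I2, (B2 i).card = s-1 ∧ B2 i ⊆ cycE s c2 x2 i) →
        (∀ i ∈ I3, (B3 i).card = s-1 ∧ B3 i ⊆ pathE s y i) →
        (∀ i ∈ I1, ∀ j ∈ I1, i ≠ j → Disjoint (B1 i) (B1 j)) →
        (∀ i ∈ I2, ∀ j ∈ I2, i ≠ j → Disjoint (B2 i) (B2 j)) →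
        (∀ i ∈ I3, ∀ j ∈ I3, i ≠ j → Disjoint (B3 i) (B3 j)) →
        Disjoint (I1.biUnion B1) (I2.biUnion B2) →
        Disjoint (I1.biUnion B1) (I3.biUnion B3) →
        Disjoint (I2.biUnion B2) (I3.biUnion B3) →
        F.card * (s-1) ≤ W.card := by
      intro B1 B2 B3 h1' h2' h3' hd1 hd2 hd3 hd12' hd13' hd23'
      have hA1 : (I1.biUnion B1).card = I1.card * (s-1) :=
        biUnion_card_eq (fun i hi => (h1' i hi).1) hd1
      have hA2 : (I2.biUnion B2).card = I2.card * (s-1) :=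
        biUnion_card_eq (fun i hi => (h2' i hi).1) hd2
      have hA3 : (I3.biUnion B3).card = I3.card * (s-1) :=
        biUnion_card_eq (fun i hi => (h3' i hi).1) hd3
      have hsub1 : I1.biUnion B1 ⊆ W := by
        intro v hv
        obtain ⟨i, hi, hvB⟩ := Finset.mem_biUnion.1 hv
        exact hFW _ (hI1r i hi).2 ((h1' i hi).2 hvB)
      have hsub2 : I2.biUnion B2 ⊆ W := by
        intro v hv
        obtain ⟨i, hi, hvB⟩ := Finset.mem_biUnion.1 hv
        exact hFW _ (hI2r i hi).2 ((h2' i hi).2 hvB)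
      have hsub3 : I3.biUnion B3 ⊆ W := by
        intro v hv
        obtain ⟨i, hi, hvB⟩ := Finset.mem_biUnion.1 hv
        exact hFW _ (hI3r i hi).2 ((h3' i hi).2 hvB)
      have htot := tripleCard hsub1 hsub2 hsub3 hd12' hd13' hd23'
      rw [hA1, hA2, hA3] at htot
      calc F.card * (s-1) = I1.card*(s-1) + I2.card*(s-1) + I3.card*(s-1) := by
            rw [hFc]; ring
      _ ≤ W.card := htot
    -- standard cycle block bundles
    have hcyc1B : ∀ i ∈ I1, (cycB s c1 x1 i).card = s-1 ∧ cycB s c1 x1 i ⊆ cycE s c1 x1 i :=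
      fun i hi => ⟨cycB_card hs h1 hx1i (hI1r i hi).1, cycB_subset hs h1 hx1i⟩
    have hcyc2B : ∀ i ∈ I2, (cycB s c2 x2 i).card = s-1 ∧ cycB s c2 x2 i ⊆ cycE s c2 x2 i :=
      fun i hi => ⟨cycB_card hs h2 hx2i (hI2r i hi).1, cycB_subset hs h2 hx2i⟩
    have hcyc1D : ∀ i ∈ I1, ∀ j ∈ I1, i ≠ j → Disjoint (cycB s c1 x1 i) (cycB s c1 x1 j) :=
      fun i hi j hj hij => cycB_disjoint hs h1 hx1i (hI1r i hi).1 (hI1r j hj).1 hij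
    have hcyc2D : ∀ i ∈ I2, ∀ j ∈ I2, i ≠ j → Disjoint (cycB s c2 x2 i) (cycB s c2 x2 j) :=
      fun i hi j hj hij => cycB_disjoint hs h2 hx2i (hI2r i hi).1 (hI2r j hj).1 hij
    -- membership in cycle verts
    have hB1V : ∀ (B : ℕ → Finset ℕ), (∀ i ∈ I1, B i ⊆ cycE s c1 x1 i) →
        ∀ v ∈ I1.biUnion B, v ∈ C1.verts := by
      intro B hB v hv
      obtain ⟨i, hi, hvB⟩ := Finset.mem_biUnion.1 hv
      rw [hx1v]
      exact cycE_subset hs h1 hx1i (hB i hi hvB)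
    have hB2V : ∀ (B : ℕ → Finset ℕ), (∀ i ∈ I2, B i ⊆ cycE s c2 x2 i) →
        ∀ v ∈ I2.biUnion B, v ∈ C2.verts := by
      intro B hB v hv
      obtain ⟨i, hi, hvB⟩ := Finset.mem_biUnion.1 hv
      rw [hx2v]
      exact cycE_subset hs h2 hx2i (hB i hi hvB)
    -- path block bundles
    have hpAcoe : ∀ i0 i, i < c3 → (↑(pA (s-1) i0 i) : Set ℕ) ⊆ ↑(Finset.range (N+1)) := by
      intro i0 i hi p hp
      simp only [Finset.mem_coe] at hp
      have h4 := pA_sub hp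
      rw [Finset.mem_Icc] at h4
      have hb : (i+1)*(s-1) ≤ N := Nat.mul_le_mul_right _ (by omega)
      simp only [Finset.coe_range, Set.mem_Iio]
      omega
    have hpathB : ∀ i0, ∀ i ∈ I3, (((pA (s-1) i0 i).image y).card = s-1) ∧
        ((pA (s-1) i0 i).image y ⊆ pathE s y i) := by
      intro i0 i hi
      constructor
      · rw [Finset.card_image_of_injOn (hyi.mono (hpAcoe i0 i (hI3r i hi).1)), pA_card]
      · intro v hv
        obtain ⟨p, hp, rfl⟩ := Finset.mem_image.1 hv
        have h4 := pA_sub hp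
        rw [Finset.mem_Icc] at h4
        have e1 : (i+1)*(s-1) = i*(s-1) + (s-1) := by ring
        simp only [pathE, Finset.mem_image, Finset.mem_range]
        exact ⟨p - i*(s-1), by omega, by congr 1; omega⟩
    have hpathD : ∀ i0, (∀ i ∈ I3, ∀ j ∈ I3, ¬(i < i0 ∧ i0 = j)) →
        ∀ i ∈ I3, ∀ j ∈ I3, i ≠ j →
        Disjoint ((pA (s-1) i0 i).image y) ((pA (s-1) i0 j).image y) := by
      intro i0 hi0 i hi j hj hij
      exact injOn_image_disjoint hyi (hpAcoe i0 i (hI3r i hi).1) (hpAcoe i0 j (hI3r j hj).1)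
        (pA_disjoint (by omega) hij (hi0 i hi j hj) (hi0 j hj i hi))
    -- element decomposition of path blocks
    have hpathMem : ∀ i0 (v : ℕ), v ∈ I3.biUnion (fun i => (pA (s-1) i0 i).image y) →
        ∃ i p, i ∈ I3 ∧ p ∈ pA (s-1) i0 i ∧ p ≤ N ∧ (i+1)*(s-1) ≤ N ∧ v = y p := by
      intro i0 v hv
      obtain ⟨i, hi, hvB⟩ := Finset.mem_biUnion.1 hv
      obtain ⟨p, hp, rfl⟩ := Finset.mem_image.1 hvB
      have h4 := pA_sub hp
      rw [Finset.mem_Icc] at h4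
      have hii := (hI3r i hi).1
      have hb : (i+1)*(s-1) ≤ N := Nat.mul_le_mul_right _ (by omega)
      exact ⟨i, p, hi, hp, by omega, hb, rfl⟩
    have hyinj' : ∀ p q, p ≤ N → q ≤ N → y p = y q → p = q := by
      intro p q hp hq h
      exact hyi (by simp only [Finset.coe_range, Set.mem_Iio]; omega)
        (by simp only [Finset.coe_range, Set.mem_Iio]; omega) h
    -- case analysis on the missing edge
    rw [hKe] at he0K
    simp only [Finset.mem_union] at he0K
    rcases he0K with (he0 | he0) | he0
    · -- a cycle-1 edge is missing
      rw [hx1e'] at he0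
      obtain ⟨j0, hj0, rfl⟩ := Finset.mem_image.1 he0
      rw [Finset.mem_range] at hj0
      have hj0I : j0 ∉ I1 := fun hc => he0F (hI1r j0 hc).2
      obtain ⟨ru, hru, hruu⟩ : ∃ r, r < n1 ∧ x1 r = u := by
        rw [hx1v] at hu
        obtain ⟨r, hr, hx⟩ := Finset.mem_image.1 hu
        exact ⟨r, Finset.mem_range.1 hr, hx⟩
      obtain ⟨B1, hB1a, hB1d⟩ := cyc_avoid hs h1 hx1i hj0 hru
      have hI1ne : ∀ i ∈ I1, i ≠ j0 := fun i hi hc => hj0I (hc ▸ hi)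
      have hB1a' : ∀ i ∈ I1, (B1 i).card = s-1 ∧ B1 i ⊆ cycE s c1 x1 i ∧ u ∉ B1 i := by
        intro i hi
        obtain ⟨hc, hsub, hav⟩ := hB1a i (hI1r i hi).1 (hI1ne i hi)
        exact ⟨hc, hsub, hruu ▸ hav⟩
      refine hfinal B1 (cycB s c2 x2) (fun i => (pA (s-1) 0 i).image y)
        (fun i hi => ⟨(hB1a' i hi).1, (hB1a' i hi).2.1⟩) hcyc2B (hpathB 0)
        (fun i hi j hj hij => hB1d i j (hI1r i hi).1 (hI1r j hj).1 (hI1ne i hi) (hI1ne j hj) hij)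
        hcyc2D
        (hpathD 0 (fun i hi j hj => by omega))
        ?_ ?_ ?_
      · exact hdisj.mono (fun v hv => hB1V B1 (fun i hi => (hB1a' i hi).2.1) v hv)
          (fun v hv => hB2V _ (fun i hi => (hcyc2B i hi).2) v hv)
      · rw [Finset.disjoint_left]
        intro v hv1 hv3
        obtain ⟨i, p, hi, hp, hpN, hb, rfl⟩ := hpathMem 0 v hv3
        rcases Nat.eq_zero_or_pos p with rfl | hp0
        · -- y 0 = u would lie in a B1 block
          obtain ⟨i', hi', hvB⟩ := Finset.mem_biUnion.1 hv1
          exact (hB1a' i' hi').2.2 (by rw [hu0]; exact hvB)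
        · -- interior vertex
          have hpN' : p < N := by
            rcases hpAmem0 : hp with _
            have h4 := pA_sub hp
            rw [Finset.mem_Icc] at h4
            rw [pA] at hp
            simp only [Nat.not_lt_zero, if_false] at hp
            rw [Finset.mem_Ico] at hp
            omega
          exact (hInt p hp0 hpN').1 (hB1V B1 (fun i hi => (hB1a' i hi).2.1) _ hv1)
      · rw [Finset.disjoint_left]
        intro v hv2 hv3
        obtain ⟨i, p, hi, hp, hpN, hb, rfl⟩ := hpathMem 0 v hv3
        have hv2' : y p ∈ C2.verts := hB2V _ (fun i hi => (hcyc2B i hi).2) _ hv2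
        rcases Nat.eq_zero_or_pos p with rfl | hp0
        · rw [← hu0] at hv2'
          exact Finset.disjoint_left.1 hdisj hu hv2'
        · have hpN' : p < N := by
            rw [pA] at hp
            simp only [Nat.not_lt_zero, if_false] at hp
            rw [Finset.mem_Ico] at hp
            omega
          exact (hInt p hp0 hpN').2 hv2'
    · -- a cycle-2 edge is missing
      rw [hx2e'] at he0
      obtain ⟨j0, hj0, rfl⟩ := Finset.mem_image.1 he0
      rw [Finset.mem_range] at hj0
      have hj0I : j0 ∉ I2 := fun hc => he0F (hI2r j0 hc).2
      obtain ⟨rw', hrw, hrww⟩ : ∃ r, r < n2 ∧ x2 r = w := by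
        rw [hx2v] at hw
        obtain ⟨r, hr, hx⟩ := Finset.mem_image.1 hw
        exact ⟨r, Finset.mem_range.1 hr, hx⟩
      obtain ⟨B2, hB2a, hB2d⟩ := cyc_avoid hs h2 hx2i hj0 hrw
      have hI2ne : ∀ i ∈ I2, i ≠ j0 := fun i hi hc => hj0I (hc ▸ hi)
      have hB2a' : ∀ i ∈ I2, (B2 i).card = s-1 ∧ B2 i ⊆ cycE s c2 x2 i ∧ w ∉ B2 i := by
        intro i hi
        obtain ⟨hc, hsub, hav⟩ := hB2a i (hI2r i hi).1 (hI2ne i hi)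
        exact ⟨hc, hsub, hrww ▸ hav⟩
      refine hfinal (cycB s c1 x1) B2 (fun i => (pA (s-1) c3 i).image y)
        hcyc1B (fun i hi => ⟨(hB2a' i hi).1, (hB2a' i hi).2.1⟩) (hpathB c3)
        hcyc1D
        (fun i hi j hj hij => hB2d i j (hI2r i hi).1 (hI2r j hj).1 (hI2ne i hi) (hI2ne j hj) hij)
        (hpathD c3 (fun i hi j hj => by have := (hI3r j hj).1; omega))
        ?_ ?_ ?_
      · exact hdisj.mono (fun v hv => hB1V _ (fun i hi => (hcyc1B i hi).2) v hv)
          (fun v hv => hB2V B2 (fun i hi => (hB2a' i hi).2.1) v hv)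
      · rw [Finset.disjoint_left]
        intro v hv1 hv3
        obtain ⟨i, p, hi, hp, hpN, hb, rfl⟩ := hpathMem c3 v hv3
        have hp1 : 1 ≤ p := by
          rw [pA] at hp
          have : i < c3 := (hI3r i hi).1
          simp only [this, if_true] at hp
          rw [Finset.mem_Ioc] at hp
          omega
        have hv1' : y p ∈ C1.verts := hB1V _ (fun i hi => (hcyc1B i hi).2) _ hv1
        rcases Nat.lt_or_ge p N with hpN' | hpN'
        · exact (hInt p hp1 hpN').1 hv1'
        · have : p = N := by omega
          rw [this, ← hw0] at hv1'
          exact Finset.disjoint_left.1 hdisj hv1' hw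
      · rw [Finset.disjoint_left]
        intro v hv2 hv3
        obtain ⟨i, p, hi, hp, hpN, hb, rfl⟩ := hpathMem c3 v hv3
        have hp1 : 1 ≤ p := by
          rw [pA] at hp
          have : i < c3 := (hI3r i hi).1
          simp only [this, if_true] at hp
          rw [Finset.mem_Ioc] at hp
          omega
        rcases Nat.lt_or_ge p N with hpN' | hpN'
        · exact (hInt p hp1 hpN').2 (hB2V B2 (fun i hi => (hB2a' i hi).2.1) _ hv2)
        · have hpe : p = N := by omega
          obtain ⟨i', hi', hvB⟩ := Finset.mem_biUnion.1 hv2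
          exact (hB2a' i' hi').2.2 (by rw [hw0, ← hpe]; exact hvB)
    · -- a path edge is missing
      rw [hye'] at he0
      obtain ⟨i0, hi0, rfl⟩ := Finset.mem_image.1 he0
      rw [Finset.mem_range] at hi0
      have hi0I : i0 ∉ I3 := fun hc => he0F (hI3r i0 hc).2
      have hI3ne : ∀ i ∈ I3, i ≠ i0 := fun i hi hc => hi0I (hc ▸ hi)
      refine hfinal (cycB s c1 x1) (cycB s c2 x2) (fun i => (pA (s-1) i0 i).image y)
        hcyc1B hcyc2B (hpathB i0) hcyc1D hcyc2D
        (hpathD i0 (fun i hi j hj => by have := hI3ne j hj; omega))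
        ?_ ?_ ?_
      · exact hdisj.mono (fun v hv => hB1V _ (fun i hi => (hcyc1B i hi).2) v hv)
          (fun v hv => hB2V _ (fun i hi => (hcyc2B i hi).2) v hv)
      · rw [Finset.disjoint_left]
        intro v hv1 hv3
        obtain ⟨i, p, hi, hp, hpN, hb, rfl⟩ := hpathMem i0 v hv3
        have hint' : 1 ≤ p ∧ p < N := by
          have hic3 : i < c3 := (hI3r i hi).1
          have hine : i ≠ i0 := hI3ne i hi
          rw [pA] at hp
          split_ifs at hp with hii0
          · rw [Finset.mem_Ioc] at hp
            have hb2 : (i+1)*(s-1) ≤ i0*(s-1) := Nat.mul_le_mul_right _ (by omega)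
            have hb3 : i0*(s-1) ≤ (c3-1)*(s-1) := Nat.mul_le_mul_right _ (by omega)
            omega
          · rw [Finset.mem_Ico] at hp
            have hp2 : 1 ≤ i := by omega
            have hb2 : 1*(s-1) ≤ i*(s-1) := Nat.mul_le_mul_right _ hp2
            omega
        exact (hInt p hint'.1 hint'.2).1 (hB1V _ (fun i hi => (hcyc1B i hi).2) _ hv1)
      · rw [Finset.disjoint_left]
        intro v hv2 hv3
        obtain ⟨i, p, hi, hp, hpN, hb, rfl⟩ := hpathMem i0 v hv3
        have hint' : 1 ≤ p ∧ p < N := by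
          have hic3 : i < c3 := (hI3r i hi).1
          have hine : i ≠ i0 := hI3ne i hi
          rw [pA] at hp
          split_ifs at hp with hii0
          · rw [Finset.mem_Ioc] at hp
            have hb2 : (i+1)*(s-1) ≤ i0*(s-1) := Nat.mul_le_mul_right _ (by omega)
            have hb3 : i0*(s-1) ≤ (c3-1)*(s-1) := Nat.mul_le_mul_right _ (by omega)
            omega
          · rw [Finset.mem_Ico] at hp
            have hp2 : 1 ≤ i := by omega
            have hb2 : 1*(s-1) ≤ i*(s-1) := Nat.mul_le_mul_right _ hp2
            omega
        exact (hInt p hint'.1 hint'.2).2 (hB2V _ (fun i hi => (hcyc2B i hi).2) _ hv2)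
  -- strict balance
  have hm5 : 5 ≤ c1 + c2 + c3 := by omega
  have hk1 : 2*(c1+c2+c3) ≤ (c1+c2+c3)*(s-1) := by
    calc 2*(c1+c2+c3) = (c1+c2+c3)*2 := by ring
    _ ≤ (c1+c2+c3)*(s-1) := Nat.mul_le_mul_left _ (by omega)
  have hSB : K.StrictlyBalanced := by
    intro H hsub hne hnon
    by_cases hFe : H.edges = K.edges
    · exfalso
      apply hne
      apply hg_ext _ hFe
      refine Finset.Subset.antisymm hsub.1 ?_
      intro v hv
      obtain ⟨e, he, hve⟩ := hcover v hv
      exact H.edge_sub e (hFe ▸ he) hve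
    · have hcard : H.edges.card * (s-1) ≤ H.verts.card :=
        hkey H.verts H.edges hsub.2 (fun e he => H.edge_sub e he) hFe
      have hvH : 0 < H.verts.card := Finset.card_pos.2 hnon
      have hnat : H.edges.card * ((c1+c2+c3)*(s-1) - 1) < (c1+c2+c3) * H.verts.card := by
        have h7 : H.edges.card * ((c1+c2+c3)*(s-1) - 1) + H.edges.card * 1 =
            H.edges.card * ((c1+c2+c3)*(s-1)) := by
          rw [← Nat.mul_add]
          congr 1
          omega
        have h8 : H.edges.card * ((c1+c2+c3)*(s-1)) = (c1+c2+c3)*(H.edges.card*(s-1)) := by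
          ring
        have h9 : (c1+c2+c3)*(H.edges.card*(s-1)) ≤ (c1+c2+c3)*H.verts.card :=
          Nat.mul_le_mul_left _ hcard
        rcases Nat.eq_zero_or_pos H.edges.card with hf0 | hf0
        · have h10 : 0 < (c1+c2+c3) * H.verts.card := Nat.mul_pos (by omega) hvH
          rw [hf0]
          omega
        · omega
      rw [HGraph.rho, HGraph.rho, div_lt_div_iff₀ (by exact_mod_cast hvH) (by
        rw [hVc]
        have h11 : 0 < (c1+c2+c3)*(s-1) - 1 := by omega
        exact_mod_cast h11), hEc, hVc]
      exact_mod_cast hnat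
  refine ⟨hEc, by rw [hEc]; exact hVc, hSB, ?_⟩
  rw [HGraph.rho, hEc, hVc]
  have hcast : ((((c1+c2+c3)*(s-1) - 1 : ℕ)) : ℝ) = ((c1:ℝ)+c2+c3) * ((s:ℝ)-1) - 1 := by
    have h9 : 1 ≤ (c1+c2+c3)*(s-1) := by omega
    have h10 : ((((c1+c2+c3)*(s-1) : ℕ)) : ℝ) = ((c1:ℝ)+c2+c3) * ((s:ℝ)-1) := by
      push_cast [Nat.cast_sub (show 1 ≤ s by omega)]
      ring
    rw [Nat.cast_sub h9, h10]
    norm_num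
  rw [hcast, one_div_div]
  have hmne : ((c1:ℝ)+c2+c3) ≠ 0 := by positivity
  push_cast
  field_simp

end RandomHypergraph
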